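/- arXiv:2412.10532 — 5 statements merged into one kernel-verified Lean document; each statement's English description precedes it below -/
import Mathlib

section
/- Let 1 ≤ k ≤ n. If I is a consistent subset of the k-element subsets of [n], then the complemented set {[n] \ X : X ∈ I} is a coconsistent subset of the (n−k)-element subsets of [n]. -/
open Finset

/-- The `k`-element subsets of `[n] = {1, …, n}`. -/
def ksubsets (n k : ℕ) : Finset (Finset ℕ) := (Finset.Icc 1 n).powersetCard k

/-- The packet of `X`: all subsets of `X` with one element removed. -/
def packet (X : Finset ℕ) : Finset (Finset ℕ) := X.image (fun x => X.erase x)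

/-- The copacket of `X` with respect to `[n]`: all sets `X ∪ {i}` for `i ∈ [n] \ X`. -/
def copacket (n : ℕ) (X : Finset ℕ) : Finset (Finset ℕ) :=
  ((Finset.Icc 1 n) \ X).image (fun i => insert i X)

/-- The lexicographic order on finite sets of naturals viewed as increasing lists:
`X < Y` iff there is `m ∈ X \ Y` below which `X` and `Y` agree. -/
def lexLt (X Y : Finset ℕ) : Prop :=
  ∃ m ∈ X, m ∉ Y ∧ ∀ a < m, (a ∈ X ↔ a ∈ Y)

/-- `r` is a strict linear order on the collection `D`. -/
def IsStrictOrdOn (D : Finset (Finset ℕ)) (r : Finset ℕ → Finset ℕ → Prop) : Prop :=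
  (∀ X ∈ D, ¬ r X X) ∧
  (∀ X ∈ D, ∀ Y ∈ D, ∀ Z ∈ D, r X Y → r Y Z → r X Z) ∧
  (∀ X ∈ D, ∀ Y ∈ D, X ≠ Y → r X Y ∨ r Y X)

/-- The restriction of `r` to `P` is the lex order. -/
def RestrLex (r : Finset ℕ → Finset ℕ → Prop) (P : Finset (Finset ℕ)) : Prop :=
  ∀ A ∈ P, ∀ B ∈ P, (r A B ↔ lexLt A B)

/-- The restriction of `r` to `P` is the antilex order. -/
def RestrAntilex (r : Finset ℕ → Finset ℕ → Prop) (P : Finset (Finset ℕ)) : Prop :=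
  ∀ A ∈ P, ∀ B ∈ P, (r A B ↔ lexLt B A)

/-- `r` is an admissible order on the `k`-element subsets of `[n]`. -/
def Admissible (n k : ℕ) (r : Finset ℕ → Finset ℕ → Prop) : Prop :=
  IsStrictOrdOn (ksubsets n k) r ∧
  ∀ X ∈ ksubsets n (k+1), RestrLex r (packet X) ∨ RestrAntilex r (packet X)

/-- `r` is a coadmissible order on the `k`-element subsets of `[n]`. -/
def Coadmissible (n k : ℕ) (r : Finset ℕ → Finset ℕ → Prop) : Prop :=
  IsStrictOrdOn (ksubsets n k) r ∧
  ∀ X ∈ ksubsets n (k-1), RestrLex r (copacket n X) ∨ RestrAntilex r (copacket n X)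

open scoped Classical in
/-- The reversal set of an order on the `k`-element subsets of `[n]`:
the `(k+1)`-element subsets whose packet is restricted to the antilex order. -/
noncomputable def Rev (n k : ℕ) (r : Finset ℕ → Finset ℕ → Prop) : Finset (Finset ℕ) :=
  (ksubsets n (k+1)).filter (fun X => RestrAntilex r (packet X))

open scoped Classical in
/-- The coreversal set of an order on the `k`-element subsets of `[n]`:
the `(k-1)`-element subsets whose copacket is restricted to the antilex order. -/
noncomputable def Corev (n k : ℕ) (r : Finset ℕ → Finset ℕ → Prop) : Finset (Finset ℕ) :=
  (ksubsets n (k-1)).filter (fun X => RestrAntilex r (copacket n X))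

/-- `P ∩ I` is a prefix (lower set) of `P` in lex order. -/
def IsLexPrefix (P I : Finset (Finset ℕ)) : Prop :=
  ∀ A ∈ P, ∀ B ∈ P, B ∈ I → lexLt A B → A ∈ I

/-- `P ∩ I` is a suffix (upper set) of `P` in lex order. -/
def IsLexSuffix (P I : Finset (Finset ℕ)) : Prop :=
  ∀ A ∈ P, ∀ B ∈ P, A ∈ I → lexLt A B → B ∈ I

/-- `I` is a consistent subset of the `k`-element subsets of `[n]`. -/
def Consistent (n k : ℕ) (I : Finset (Finset ℕ)) : Prop :=
  I ⊆ ksubsets n k ∧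
  ∀ X ∈ ksubsets n (k+1), IsLexPrefix (packet X) I ∨ IsLexSuffix (packet X) I

/-- `I` is a coconsistent subset of the `k`-element subsets of `[n]`. -/
def CoConsistent (n k : ℕ) (I : Finset (Finset ℕ)) : Prop :=
  I ⊆ ksubsets n k ∧
  ∀ X ∈ ksubsets n (k-1), IsLexPrefix (copacket n X) I ∨ IsLexSuffix (copacket n X) I

/-- Deletion `I \ n` of a set of subsets. -/
def del (I : Finset (Finset ℕ)) (n : ℕ) : Finset (Finset ℕ) := I.filter (fun X => n ∉ X)

/-- Contraction `I / n` of a set of subsets. -/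
def contr (I : Finset (Finset ℕ)) (n : ℕ) : Finset (Finset ℕ) :=
  (I.filter (fun X => n ∈ X)).image (fun X => X.erase n)

/-- Contraction `ρ / n` of a linear order: `X < Y` iff `X ∪ {n} < Y ∪ {n}` in `ρ`. -/
def contrOrd (r : Finset ℕ → Finset ℕ → Prop) (n : ℕ) : Finset ℕ → Finset ℕ → Prop :=
  fun X Y => r (insert n X) (insert n Y)

/-- The Gale order: componentwise comparison of the increasing enumerations. -/
def galeLe (A B : Finset ℕ) : Prop :=
  List.Forall₂ (· ≤ ·) (A.sort (· ≤ ·)) (B.sort (· ≤ ·))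

/-- The consistent poset relation `≺_I` on the `(k-1)`-element subsets of `[n]`:
within the packet of `X ∈ I` the antilex order, and within the packet of
`X ∉ I` the lex order, transitively closed. -/
def cpRel (n k : ℕ) (I : Finset (Finset ℕ)) : Finset ℕ → Finset ℕ → Prop :=
  Relation.TransGen (fun A B =>
    ∃ X ∈ ksubsets n k, A ∈ packet X ∧ B ∈ packet X ∧
      ((X ∈ I ∧ lexLt B A) ∨ (X ∉ I ∧ lexLt A B)))

/-- A single-step-inclusion cover within the collection `C`. -/
def SSIStep (C : Finset (Finset ℕ) → Prop) (A B : Finset (Finset ℕ)) : Prop :=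
  C A ∧ C B ∧ ∃ Y, Y ∉ A ∧ B = insert Y A

/-- The single step inclusion order on the collection `C`. -/
def SSILe (C : Finset (Finset ℕ) → Prop) : Finset (Finset ℕ) → Finset (Finset ℕ) → Prop :=
  Relation.ReflTransGen (SSIStep C)

lemma lexLt_compl {n : ℕ} {A B : Finset ℕ} (hA : A ⊆ Finset.Icc 1 n)
    (h : lexLt A B) : lexLt (Finset.Icc 1 n \ B) (Finset.Icc 1 n \ A) := by
  obtain ⟨m, hmA, hmB, hag⟩ := h
  refine ⟨m, by simp [Finset.mem_sdiff, hA hmA, hmB], by simp [hmA], fun a ha => ?_⟩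
  simp only [Finset.mem_sdiff]
  rw [hag a ha]

lemma compl_mem_packet {n : ℕ} {X Y : Finset ℕ} (hX : X ⊆ Finset.Icc 1 n)
    (hY : Y ∈ copacket n X) :
    Y ⊆ Finset.Icc 1 n ∧ (Finset.Icc 1 n \ Y) ∈ packet (Finset.Icc 1 n \ X) := by
  simp only [copacket, Finset.mem_image, Finset.mem_sdiff] at hY
  obtain ⟨i, ⟨hi, hiX⟩, rfl⟩ := hY
  constructor
  · exact Finset.insert_subset hi hX
  · simp only [packet, Finset.mem_image]
    refine ⟨i, by simp [Finset.mem_sdiff, hi, hiX], ?_⟩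
    ext a
    simp only [Finset.mem_sdiff, Finset.mem_erase, Finset.mem_insert]
    tauto

/-- If `I` is a consistent subset of the `k`-element subsets of `[n]`, then
`{[n] \ X : X ∈ I}` is a coconsistent subset of the `(n-k)`-element subsets of `[n]`. -/
theorem complement_consistent_coconsistent (n k : ℕ) (hk : 1 ≤ k) (hkn : k ≤ n)
    (I : Finset (Finset ℕ)) (hI : Consistent n k I) :
    CoConsistent n (n - k) (I.image (fun X => Finset.Icc 1 n \ X)) := by
  classical
  obtain ⟨hIsub, hIcon⟩ := hI
  have hcard : (Finset.Icc 1 n).card = n := Nat.card_Icc 1 n ▸ by omega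
  -- membership facts for I
  have hImem : ∀ X ∈ I, X ⊆ Finset.Icc 1 n ∧ X.card = k := by
    intro X hX
    have := hIsub hX
    simpa [ksubsets, Finset.mem_powersetCard] using this
  constructor
  · -- the image is a set of (n-k)-subsets
    intro B hB
    simp only [Finset.mem_image] at hB
    obtain ⟨X, hX, rfl⟩ := hB
    obtain ⟨h1, h2⟩ := hImem X hX
    simp only [ksubsets, Finset.mem_powersetCard]
    exact ⟨Finset.sdiff_subset, by rw [Finset.card_sdiff_of_subset h1, hcard, h2]⟩
  · intro X hX
    by_cases hkn' : k = n
    · -- degenerate case: copacket elements are nonempty, image elements are empty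
      left
      intro A hA B hB hBJ hlex
      exfalso
      simp only [Finset.mem_image] at hBJ
      obtain ⟨X', hX', rfl⟩ := hBJ
      obtain ⟨h1, h2⟩ := hImem X' hX'
      have hX'eq : X' = Finset.Icc 1 n :=
        Finset.eq_of_subset_of_card_le h1 (by rw [h2, hcard, hkn'])
      rw [hX'eq, Finset.sdiff_self] at hB
      simp only [copacket, Finset.mem_image, Finset.mem_sdiff] at hB
      obtain ⟨i, ⟨hi, hiX⟩, hBe⟩ := hB
      exact (Finset.insert_ne_empty i X) hBe
    · -- main case: k < n
      have hkn2 : k < n := lt_of_le_of_ne hkn hkn'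
      simp only [ksubsets, Finset.mem_powersetCard] at hX
      obtain ⟨hXsub, hXcard⟩ := hX
      set Z := Finset.Icc 1 n \ X with hZ
      have hZmem : Z ∈ ksubsets n (k+1) := by
        simp only [ksubsets, Finset.mem_powersetCard]
        refine ⟨Finset.sdiff_subset, ?_⟩
        rw [Finset.card_sdiff_of_subset hXsub, hcard, hXcard]
        omega
      -- complement facts
      have hcompl : ∀ Y ∈ copacket n X, Y ⊆ Finset.Icc 1 n ∧ (Finset.Icc 1 n \ Y) ∈ packet Z :=
        fun Y hY => compl_mem_packet hXsub hY
      have hmemJ : ∀ Y, Y ⊆ Finset.Icc 1 n →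
          (Y ∈ I.image (fun X => Finset.Icc 1 n \ X) ↔ (Finset.Icc 1 n \ Y) ∈ I) := by
        intro Y hYsub
        constructor
        · rintro hY
          simp only [Finset.mem_image] at hY
          obtain ⟨X', hX', rfl⟩ := hY
          rwa [Finset.sdiff_sdiff_eq_self (hImem X' hX').1]
        · intro h
          exact Finset.mem_image.mpr ⟨_, h, Finset.sdiff_sdiff_eq_self hYsub⟩
      rcases hIcon Z hZmem with hpre | hsuf
      · right
        intro A hA B hB hAJ hlex
        obtain ⟨hAsub, hA'⟩ := hcompl A hA
        obtain ⟨hBsub, hB'⟩ := hcompl B hB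
        rw [hmemJ A hAsub] at hAJ
        rw [hmemJ B hBsub]
        exact hpre _ hB' _ hA' hAJ (lexLt_compl hAsub hlex)
      · left
        intro A hA B hB hBJ hlex
        obtain ⟨hAsub, hA'⟩ := hcompl A hA
        obtain ⟨hBsub, hB'⟩ := hcompl B hB
        rw [hmemJ B hBsub] at hBJ
        rw [hmemJ A hAsub]
        exact hsuf _ hB' _ hA' hBJ (lexLt_compl hAsub hlex)
end

section
/- Let 2 ≤ k ≤ n and let ρ be a coadmissible order on the k-element subsets of [n]. Then the coreversal set Corev(ρ) is a coconsistent subset of the (k−1)-element subsets of [n]. -/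
open Finset

lemma mem_ksubsets' {n k : ℕ} {X : Finset ℕ} :
    X ∈ ksubsets n k ↔ X ⊆ Finset.Icc 1 n ∧ X.card = k := by
  simp [ksubsets, Finset.mem_powersetCard]

lemma insert_mem_ksubsets' {n k i : ℕ} {X : Finset ℕ} (hX : X ∈ ksubsets n k)
    (hi : i ∈ Finset.Icc 1 n) (hiX : i ∉ X) : insert i X ∈ ksubsets n (k+1) := by
  rw [mem_ksubsets'] at *
  exact ⟨Finset.insert_subset hi hX.1,
    by rw [Finset.card_insert_of_notMem hiX, hX.2]⟩

lemma insert_mem_copacket' {n i : ℕ} {X : Finset ℕ}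
    (hi : i ∈ Finset.Icc 1 n) (hiX : i ∉ X) : insert i X ∈ copacket n X := by
  simp only [copacket, Finset.mem_image]
  exact ⟨i, Finset.mem_sdiff.2 ⟨hi, hiX⟩, rfl⟩

lemma mem_copacket' {n : ℕ} {X A : Finset ℕ} :
    A ∈ copacket n X ↔ ∃ i, (i ∈ Finset.Icc 1 n ∧ i ∉ X) ∧ A = insert i X := by
  simp [copacket, Finset.mem_image, Finset.mem_sdiff, eq_comm]

lemma lexLt_insert' {i j : ℕ} {X : Finset ℕ} (hi : i ∉ X) (hj : j ∉ X) (h : i < j) :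
    lexLt (insert i X) (insert j X) := by
  refine ⟨i, Finset.mem_insert_self i X, ?_, ?_⟩
  · simp only [Finset.mem_insert, not_or]
    exact ⟨h.ne, hi⟩
  · intro a ha
    simp [Finset.mem_insert, ha.ne, (ha.trans h).ne]

lemma lt_of_lexLt_insert' {i j : ℕ} {X : Finset ℕ} (hi : i ∉ X) (hj : j ∉ X)
    (h : lexLt (insert i X) (insert j X)) : i < j := by
  obtain ⟨m, hm, hm', hag⟩ := h
  rcases Finset.mem_insert.1 hm with rfl | hmX
  · have hij : m ≠ j := fun e => hm' (e ▸ Finset.mem_insert_self j X)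
    by_contra hle
    push_neg at hle
    have hji : j < m := lt_of_le_of_ne hle (Ne.symm hij)
    have := (hag j hji).2 (Finset.mem_insert_self j X)
    rcases Finset.mem_insert.1 this with e | hjX
    · exact hij e.symm
    · exact hj hjX
  · exact absurd (Finset.mem_insert_of_mem hmX) hm'

lemma rev_cmp' {n k : ℕ} {r : Finset ℕ → Finset ℕ → Prop} {A : Finset ℕ}
    (hA : A ∈ Corev n k r) {u v : ℕ} (hu : u ∈ Finset.Icc 1 n) (hv : v ∈ Finset.Icc 1 n)
    (huA : u ∉ A) (hvA : v ∉ A) (huv : u < v) : r (insert v A) (insert u A) := by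
  classical
  have h := (Finset.mem_filter.1 hA).2
  exact (h _ (insert_mem_copacket' hv hvA) _ (insert_mem_copacket' hu huA)).2
    (lexLt_insert' huA hvA huv)

lemma nonrev_cmp' {n k : ℕ} {r : Finset ℕ → Finset ℕ → Prop} (hr : Coadmissible n k r)
    {A : Finset ℕ} (hA : A ∈ ksubsets n (k-1)) (hA' : A ∉ Corev n k r)
    {u v : ℕ} (hu : u ∈ Finset.Icc 1 n) (hv : v ∈ Finset.Icc 1 n)
    (huA : u ∉ A) (hvA : v ∉ A) (huv : u < v) : r (insert u A) (insert v A) := by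
  classical
  rcases hr.2 A hA with hlex | hanti
  · exact (hlex _ (insert_mem_copacket' hu huA) _ (insert_mem_copacket' hv hvA)).2
      (lexLt_insert' huA hvA huv)
  · exact absurd (Finset.mem_filter.2 ⟨hA, hanti⟩) hA'

section Pattern

variable {n k : ℕ} {r : Finset ℕ → Finset ℕ → Prop} {X : Finset ℕ} {i j l : ℕ}

lemma pat_setup (hk : 2 ≤ k) (hr : Coadmissible n k r)
    (hX : X ∈ ksubsets n (k - 1 - 1))
    (hi : i ∈ Finset.Icc 1 n) (hj : j ∈ Finset.Icc 1 n) (hl : l ∈ Finset.Icc 1 n)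
    (hiX : i ∉ X) (hjX : j ∉ X) (hlX : l ∉ X) (hij : i < j) (hjl : j < l) :
    (insert i X ∈ ksubsets n (k-1) ∧ insert j X ∈ ksubsets n (k-1) ∧
      insert l X ∈ ksubsets n (k-1)) ∧
    (insert j (insert i X) ∈ ksubsets n k ∧ insert l (insert i X) ∈ ksubsets n k ∧
      insert l (insert j X) ∈ ksubsets n k) := by
  have e1 : k - 1 - 1 + 1 = k - 1 := by omega
  have e2 : k - 1 + 1 = k := by omega
  have hAi : insert i X ∈ ksubsets n (k-1) := by
    have := insert_mem_ksubsets' hX hi hiX; rwa [e1] at this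
  have hAj : insert j X ∈ ksubsets n (k-1) := by
    have := insert_mem_ksubsets' hX hj hjX; rwa [e1] at this
  have hAl : insert l X ∈ ksubsets n (k-1) := by
    have := insert_mem_ksubsets' hX hl hlX; rwa [e1] at this
  have hjAi : j ∉ insert i X := by simp [Finset.mem_insert, hij.ne', hjX]
  have hlAi : l ∉ insert i X := by simp [Finset.mem_insert, (hij.trans hjl).ne', hlX]
  have hlAj : l ∉ insert j X := by simp [Finset.mem_insert, hjl.ne', hlX]
  refine ⟨⟨hAi, hAj, hAl⟩, ?_, ?_, ?_⟩
  · have := insert_mem_ksubsets' hAi hj hjAi; rwa [e2] at this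
  · have := insert_mem_ksubsets' hAi hl hlAi; rwa [e2] at this
  · have := insert_mem_ksubsets' hAj hl hlAj; rwa [e2] at this

lemma pat101 (hk : 2 ≤ k) (hr : Coadmissible n k r)
    (hX : X ∈ ksubsets n (k - 1 - 1))
    (hi : i ∈ Finset.Icc 1 n) (hj : j ∈ Finset.Icc 1 n) (hl : l ∈ Finset.Icc 1 n)
    (hiX : i ∉ X) (hjX : j ∉ X) (hlX : l ∉ X) (hij : i < j) (hjl : j < l)
    (h1 : insert i X ∈ Corev n k r) (h2 : insert j X ∉ Corev n k r)
    (h3 : insert l X ∈ Corev n k r) : False := by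
  obtain ⟨⟨hAi, hAj, hAl⟩, hYij, hYil, hYjl⟩ :=
    pat_setup hk hr hX hi hj hl hiX hjX hlX hij hjl
  have hjAi : j ∉ insert i X := by simp [Finset.mem_insert, hij.ne', hjX]
  have hlAi : l ∉ insert i X := by simp [Finset.mem_insert, (hij.trans hjl).ne', hlX]
  have hiAj : i ∉ insert j X := by simp [Finset.mem_insert, hij.ne, hiX]
  have hlAj : l ∉ insert j X := by simp [Finset.mem_insert, hjl.ne', hlX]
  have hiAl : i ∉ insert l X := by simp [Finset.mem_insert, (hij.trans hjl).ne, hiX]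
  have hjAl : j ∉ insert l X := by simp [Finset.mem_insert, hjl.ne, hjX]
  have f1 : r (insert l (insert i X)) (insert j (insert i X)) :=
    rev_cmp' h1 hj hl hjAi hlAi hjl
  have f2 : r (insert i (insert j X)) (insert l (insert j X)) :=
    nonrev_cmp' hr hAj h2 hi hl hiAj hlAj (hij.trans hjl)
  have f3 : r (insert j (insert l X)) (insert i (insert l X)) :=
    rev_cmp' h3 hi hj hiAl hjAl hij
  rw [Finset.insert_comm i j] at f2
  rw [Finset.insert_comm j l, Finset.insert_comm i l] at f3
  obtain ⟨irr, tra, -⟩ := hr.1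
  have g1 := tra _ hYil _ hYij _ hYjl f1 f2
  have g2 := tra _ hYil _ hYjl _ hYil g1 f3
  exact irr _ hYil g2

lemma pat010 (hk : 2 ≤ k) (hr : Coadmissible n k r)
    (hX : X ∈ ksubsets n (k - 1 - 1))
    (hi : i ∈ Finset.Icc 1 n) (hj : j ∈ Finset.Icc 1 n) (hl : l ∈ Finset.Icc 1 n)
    (hiX : i ∉ X) (hjX : j ∉ X) (hlX : l ∉ X) (hij : i < j) (hjl : j < l)
    (h1 : insert i X ∉ Corev n k r) (h2 : insert j X ∈ Corev n k r)
    (h3 : insert l X ∉ Corev n k r) : False := by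
  obtain ⟨⟨hAi, hAj, hAl⟩, hYij, hYil, hYjl⟩ :=
    pat_setup hk hr hX hi hj hl hiX hjX hlX hij hjl
  have hjAi : j ∉ insert i X := by simp [Finset.mem_insert, hij.ne', hjX]
  have hlAi : l ∉ insert i X := by simp [Finset.mem_insert, (hij.trans hjl).ne', hlX]
  have hiAj : i ∉ insert j X := by simp [Finset.mem_insert, hij.ne, hiX]
  have hlAj : l ∉ insert j X := by simp [Finset.mem_insert, hjl.ne', hlX]
  have hiAl : i ∉ insert l X := by simp [Finset.mem_insert, (hij.trans hjl).ne, hiX]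
  have hjAl : j ∉ insert l X := by simp [Finset.mem_insert, hjl.ne, hjX]
  have f1 : r (insert j (insert i X)) (insert l (insert i X)) :=
    nonrev_cmp' hr hAi h1 hj hl hjAi hlAi hjl
  have f2 : r (insert l (insert j X)) (insert i (insert j X)) :=
    rev_cmp' h2 hi hl hiAj hlAj (hij.trans hjl)
  have f3 : r (insert i (insert l X)) (insert j (insert l X)) :=
    nonrev_cmp' hr hAl h3 hi hj hiAl hjAl hij
  rw [Finset.insert_comm i j] at f2
  rw [Finset.insert_comm j l, Finset.insert_comm i l] at f3
  obtain ⟨irr, tra, -⟩ := hr.1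
  have g1 := tra _ hYij _ hYil _ hYjl f1 f3
  have g2 := tra _ hYij _ hYjl _ hYij g1 f2
  exact irr _ hYij g2

end Pattern

/-- If `ρ` is a coadmissible order on the `k`-element subsets of `[n]`
(with `2 ≤ k ≤ n`), then its coreversal set is a coconsistent subset of the
`(k-1)`-element subsets of `[n]`. -/
theorem corev_coconsistent (n k : ℕ) (hk : 2 ≤ k) (hkn : k ≤ n)
    (r : Finset ℕ → Finset ℕ → Prop) (hr : Coadmissible n k r) :
    CoConsistent n (k - 1) (Corev n k r) := by
  classical
  constructor
  · intro A hA
    exact (Finset.mem_filter.1 hA).1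
  · intro X hX
    by_contra hcon
    push_neg at hcon
    obtain ⟨hpre, hsuf⟩ := hcon
    simp only [IsLexPrefix, not_forall] at hpre
    simp only [IsLexSuffix, not_forall] at hsuf
    obtain ⟨A, hA, B, hB, hBI, hAB, hAI⟩ := hpre
    obtain ⟨C, hC, D, hD, hCI, hCD, hDI⟩ := hsuf
    obtain ⟨p, ⟨hp, hpX⟩, rfl⟩ := mem_copacket'.1 hA
    obtain ⟨q, ⟨hq, hqX⟩, rfl⟩ := mem_copacket'.1 hB
    obtain ⟨s, ⟨hs, hsX⟩, rfl⟩ := mem_copacket'.1 hC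
    obtain ⟨t, ⟨ht, htX⟩, rfl⟩ := mem_copacket'.1 hD
    have hpq : p < q := lt_of_lexLt_insert' hpX hqX hAB
    have hst : s < t := lt_of_lexLt_insert' hsX htX hCD
    have hX' : X ∈ ksubsets n (k - 1 - 1) := hX
    rcases lt_trichotomy q t with h | h | h
    · exact pat010 hk hr hX' hp hq ht hpX hqX htX hpq h hAI hBI hDI
    · subst h
      exact hDI hBI
    · exact pat101 hk hr hX' hs ht hq hsX htX hqX hst h hCI hDI hBI
end

section
/- Let 2 ≤ k ≤ n and let I be a consistent subset of the k-element subsets of [n]. If J is an upper set or a lower set of the consistent poset relation ≺_I on the (k−1)-element subsets of [n], then J is a consistent subset of the (k−1)-element subsets of [n]. -/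
open Finset

/-- If `I` is a consistent subset of the `k`-element subsets of `[n]`
(`2 ≤ k ≤ n`) and `J ⊆ binom([n], k-1)` is an upper set or a lower set of the
consistent poset relation `≺_I`, then `J` is a consistent subset of the
`(k-1)`-element subsets of `[n]`. -/
theorem upper_lower_set_of_consistent_poset (n k : ℕ) (hk : 2 ≤ k) (hkn : k ≤ n)
    (I J : Finset (Finset ℕ)) (hI : Consistent n k I) (hJ : J ⊆ ksubsets n (k - 1))
    (h : (∀ A B, cpRel n k I A B → A ∈ J → B ∈ J) ∨
         (∀ A B, cpRel n k I A B → B ∈ J → A ∈ J)) :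
    Consistent n (k - 1) J := by
  refine ⟨hJ, ?_⟩
  intro X hX
  have hX' : X ∈ ksubsets n k := by
    have hk1 : k - 1 + 1 = k := by omega
    rwa [hk1] at hX
  by_cases hXI : X ∈ I
  · rcases h with h | h
    · -- upper set, X ∈ I : prefix
      left
      intro A hA B hB hBJ hlex
      exact h B A (Relation.TransGen.single ⟨X, hX', hB, hA, Or.inl ⟨hXI, hlex⟩⟩) hBJ
    · -- lower set, X ∈ I : suffix
      right
      intro A hA B hB hAJ hlex
      exact h B A (Relation.TransGen.single ⟨X, hX', hB, hA, Or.inl ⟨hXI, hlex⟩⟩) hAJ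
  · rcases h with h | h
    · -- upper set, X ∉ I : suffix
      right
      intro A hA B hB hAJ hlex
      exact h A B (Relation.TransGen.single ⟨X, hX', hA, hB, Or.inr ⟨hXI, hlex⟩⟩) hAJ
    · -- lower set, X ∉ I : prefix
      left
      intro A hA B hB hBJ hlex
      exact h A B (Relation.TransGen.single ⟨X, hX', hA, hB, Or.inr ⟨hXI, hlex⟩⟩) hBJ
end

section
/- For integers 2 ≤ k < n, the number of consistent subsets of the (k+1)-element subsets of [n] is at most the product over m from k to n−1 of the number of consistent subsets of the k-element subsets of [m]: |C(n,k+1)| ≤ ∏_{m=k}^{n−1} |C(m,k)|. -/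
open Finset

/-- Projection of `I` onto sets with max `m+1`, with the max erased. -/
def proj (m : ℕ) (I : Finset (Finset ℕ)) : Finset (Finset ℕ) :=
  (I.filter (fun X => m+1 ∈ X ∧ X ⊆ Finset.Icc 1 (m+1))).image (fun X => X.erase (m+1))

lemma lexLt_insert {A B : Finset ℕ} {t : ℕ} (htA : t ∉ A) (htB : t ∉ B)
    (h : lexLt A B) : lexLt (insert t A) (insert t B) := by
  obtain ⟨p, hpA, hpB, hagree⟩ := h
  refine ⟨p, Finset.mem_insert_of_mem hpA, ?_, ?_⟩
  · simp only [Finset.mem_insert]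
    rintro (rfl | h) <;> [exact htA hpA; exact hpB h]
  · intro a ha
    simp only [Finset.mem_insert]
    constructor <;> rintro (rfl | h)
    · exact Or.inl rfl
    · exact Or.inr ((hagree a ha).1 h)
    · exact Or.inl rfl
    · exact Or.inr ((hagree a ha).2 h)

lemma mem_proj_iff {m : ℕ} {I : Finset (Finset ℕ)} {A : Finset ℕ}
    (hA1 : m+1 ∉ A) (hA2 : A ⊆ Finset.Icc 1 m) :
    A ∈ proj m I ↔ insert (m+1) A ∈ I := by
  constructor
  · rintro h
    simp only [proj, Finset.mem_image, Finset.mem_filter] at h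
    obtain ⟨X, ⟨hXI, hmX, _⟩, rfl⟩ := h
    rwa [Finset.insert_erase hmX]
  · intro h
    simp only [proj, Finset.mem_image, Finset.mem_filter]
    refine ⟨insert (m+1) A, ⟨h, Finset.mem_insert_self _ _, ?_⟩, ?_⟩
    · intro a ha
      rcases Finset.mem_insert.1 ha with rfl | ha
      · simp
      · have := hA2 ha
        simp only [Finset.mem_Icc] at this ⊢
        omega
    · rw [Finset.erase_insert hA1]

lemma proj_consistent {n k m : ℕ} {I : Finset (Finset ℕ)}
    (hI : Consistent n (k+1) I) (hm : m < n) : Consistent m k (proj m I) := by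
  constructor
  · intro A hA
    simp only [proj, Finset.mem_image, Finset.mem_filter] at hA
    obtain ⟨X, ⟨hXI, hmX, hXsub⟩, rfl⟩ := hA
    have hX := hI.1 hXI
    simp only [ksubsets, Finset.mem_powersetCard] at hX ⊢
    constructor
    · intro a ha
      have ha1 := Finset.mem_of_mem_erase ha
      have ha2 := Finset.ne_of_mem_erase ha
      have := hXsub ha1
      simp only [Finset.mem_Icc] at this ⊢
      omega
    · rw [Finset.card_erase_of_mem hmX, hX.2]; omega
  · intro Y hY
    simp only [ksubsets, Finset.mem_powersetCard] at hY
    have hmY : m+1 ∉ Y := by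
      intro h
      have := hY.1 h
      simp only [Finset.mem_Icc] at this
      omega
    have hZ : insert (m+1) Y ∈ ksubsets n (k+1+1) := by
      simp only [ksubsets, Finset.mem_powersetCard]
      constructor
      · intro a ha
        rcases Finset.mem_insert.1 ha with rfl | ha
        · simp only [Finset.mem_Icc]; omega
        · have := hY.1 ha
          simp only [Finset.mem_Icc] at this ⊢
          omega
      · rw [Finset.card_insert_of_notMem hmY, hY.2]
    -- facts about elements of packet Y
    have hfacts : ∀ A ∈ packet Y, m+1 ∉ A ∧ A ⊆ Finset.Icc 1 m ∧
        insert (m+1) A ∈ packet (insert (m+1) Y) := by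
      intro A hA
      simp only [packet, Finset.mem_image] at hA
      obtain ⟨y, hy, rfl⟩ := hA
      have hy1 : y ≠ m+1 := by
        intro h; exact hmY (h ▸ hy)
      refine ⟨fun h => hmY (Finset.mem_of_mem_erase h),
        fun a ha => hY.1 (Finset.mem_of_mem_erase ha), ?_⟩
      simp only [packet, Finset.mem_image]
      refine ⟨y, Finset.mem_insert_of_mem hy, ?_⟩
      rw [Finset.erase_insert_of_ne (Ne.symm hy1)]
    rcases hI.2 _ hZ with hpre | hsuf
    · left
      intro A hA B hB hBI hlt
      obtain ⟨hmA, hAs, hA'⟩ := hfacts A hA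
      obtain ⟨hmB, hBs, hB'⟩ := hfacts B hB
      rw [mem_proj_iff hmB hBs] at hBI
      rw [mem_proj_iff hmA hAs]
      exact hpre _ hA' _ hB' hBI (lexLt_insert hmA hmB hlt)
    · right
      intro A hA B hB hAI hlt
      obtain ⟨hmA, hAs, hA'⟩ := hfacts A hA
      obtain ⟨hmB, hBs, hB'⟩ := hfacts B hB
      rw [mem_proj_iff hmA hAs] at hAI
      rw [mem_proj_iff hmB hBs]
      exact hsuf _ hA' _ hB' hAI (lexLt_insert hmA hmB hlt)

lemma proj_inj {n k : ℕ} {I J : Finset (Finset ℕ)}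
    (hI : Consistent n (k+1) I) (hJ : Consistent n (k+1) J)
    (h : ∀ m, k ≤ m → m < n → proj m I = proj m J) : I = J := by
  have key : ∀ (I J : Finset (Finset ℕ)), Consistent n (k+1) I → Consistent n (k+1) J →
      (∀ m, k ≤ m → m < n → proj m I = proj m J) → ∀ X ∈ I, X ∈ J := by
    intro I J hI hJ h X hX
    have hXk := hI.1 hX
    simp only [ksubsets, Finset.mem_powersetCard] at hXk
    have hne : X.Nonempty := by
      rw [← Finset.card_pos, hXk.2]; omega
    set M := X.max' hne with hM
    have hMX : M ∈ X := X.max'_mem hne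
    have hXsub : X ⊆ Finset.Icc 1 M := by
      intro a ha
      have h1 := hXk.1 ha
      simp only [Finset.mem_Icc] at h1 ⊢
      exact ⟨h1.1, X.le_max' a ha⟩
    have hMn : M ≤ n := by
      have := hXk.1 hMX
      simp only [Finset.mem_Icc] at this
      exact this.2
    have hMk : k + 1 ≤ M := by
      have := Finset.card_le_card hXsub
      rw [hXk.2, Nat.card_Icc] at this
      omega
    have hm1 : M - 1 + 1 = M := by omega
    have hmem : X.erase M ∈ proj (M-1) I := by
      simp only [proj, Finset.mem_image, Finset.mem_filter, hm1]
      exact ⟨X, ⟨hX, hMX, hXsub⟩, rfl⟩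
    rw [h (M-1) (by omega) (by omega)] at hmem
    simp only [proj, Finset.mem_image, Finset.mem_filter, hm1] at hmem
    obtain ⟨X', ⟨hX'J, hMX', _⟩, hXX'⟩ := hmem
    have : X' = X := by
      rw [← Finset.insert_erase hMX', hXX', Finset.insert_erase hMX]
    rwa [← this]
  apply Finset.Subset.antisymm
  · intro X hX; exact key I J hI hJ h X hX
  · intro X hX; exact key J I hJ hI (fun m h1 h2 => (h m h1 h2).symm) X hX

lemma consistent_finite (m j : ℕ) : Finite {I : Finset (Finset ℕ) // Consistent m j I} := by
  have : Function.Injective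
      (fun I : {I : Finset (Finset ℕ) // Consistent m j I} =>
        (⟨I.1, Finset.mem_powerset.2 I.2.1⟩ : ((ksubsets m j).powerset : Finset _))) := by
    intro a b hab
    exact Subtype.ext (by simpa [Subtype.ext_iff] using hab)
  exact Finite.of_injective _ this


/-- For `2 ≤ k < n`, the number of consistent subsets of the
`(k+1)`-element subsets of `[n]` is at most `∏_{m=k}^{n-1} |C(m,k)|`. -/
theorem consistent_card_product_bound (n k : ℕ) (hk : 2 ≤ k) (hkn : k < n) :
    Nat.card {I : Finset (Finset ℕ) // Consistent n (k + 1) I} ≤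
      ∏ m ∈ Finset.Ico k n, Nat.card {I : Finset (Finset ℕ) // Consistent m k I} := by
  have hfin := consistent_finite
  have : ∀ m : (Finset.Ico k n), Finite {I : Finset (Finset ℕ) // Consistent m.1 k I} :=
    fun m => hfin m.1 k
  have hΦ : Function.Injective
      (fun (I : {I : Finset (Finset ℕ) // Consistent n (k+1) I})
        (m : (Finset.Ico k n)) =>
        (⟨proj m.1 I.1, proj_consistent I.2 (Finset.mem_Ico.1 m.2).2⟩ :
          {J : Finset (Finset ℕ) // Consistent m.1 k J})) := by
    intro I J hIJ
    apply Subtype.ext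
    apply proj_inj I.2 J.2
    intro m hkm hmn
    have := congrFun hIJ ⟨m, Finset.mem_Ico.2 ⟨hkm, hmn⟩⟩
    exact congrArg Subtype.val this
  calc Nat.card {I : Finset (Finset ℕ) // Consistent n (k + 1) I}
      ≤ Nat.card (∀ m : (Finset.Ico k n), {I : Finset (Finset ℕ) // Consistent m.1 k I}) :=
        Nat.card_le_card_of_injective _ hΦ
    _ = ∏ m : (Finset.Ico k n), Nat.card {I : Finset (Finset ℕ) // Consistent m.1 k I} :=
        Nat.card_pi
    _ = ∏ m ∈ Finset.Ico k n, Nat.card {I : Finset (Finset ℕ) // Consistent m k I} :=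
        Finset.prod_coe_sort (Finset.Ico k n)
          (fun m => Nat.card {I : Finset (Finset ℕ) // Consistent m k I})
end

section
/- Let 1 ≤ k < n and let c be an integer. The set S_c = {X : X is a k-element subset of [n] with element sum equal to c} is an antichain in the Gale order on k-element subsets of [n], and the number of consistent subsets of the k-element subsets of [n] is at least 2^{|S_c|}. -/
open Finset

private lemma forall2_sum_le : ∀ {l1 l2 : List ℕ}, List.Forall₂ (· ≤ ·) l1 l2 →
    l1.sum ≤ l2.sum := by
  intro l1 l2 h
  induction h with
  | nil => simp
  | cons hab _ ih => simp only [List.sum_cons]; omega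

private lemma forall2_eq_of_sum_eq : ∀ {l1 l2 : List ℕ}, List.Forall₂ (· ≤ ·) l1 l2 →
    l1.sum = l2.sum → l1 = l2 := by
  intro l1 l2 h
  induction h with
  | nil => intro; rfl
  | @cons a b l1' l2' hab htl ih =>
    intro hs
    simp only [List.sum_cons] at hs
    have hle := forall2_sum_le htl
    have hab2 : a = b := by omega
    have h1 := ih (by omega)
    rw [hab2, h1]

private lemma sort_sum (A : Finset ℕ) : (A.sort (· ≤ ·)).sum = ∑ x ∈ A, x := by
  have h := Finset.sum_map_toList A (fun x => x)
  rw [List.map_id'] at h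
  rw [← h]
  exact (Finset.sort_perm_toList _ _).sum_eq

private lemma erase_lexLt {X : Finset ℕ} {x y : ℕ} (hx : x ∈ X) (hy : y ∈ X)
    (h : lexLt (X.erase x) (X.erase y)) : y < x := by
  obtain ⟨m, hmA, hmB, hag⟩ := h
  have hmX : m ∈ X := Finset.mem_of_mem_erase hmA
  have hmx : m ≠ x := (Finset.mem_erase.1 hmA).1
  have hmy : m = y := by
    by_contra hne
    exact hmB (Finset.mem_erase.2 ⟨hne, hmX⟩)
  subst hmy
  rcases lt_trichotomy x m with hlt | heq | hgt
  · have := hag x hlt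
    have hxr : x ∈ X.erase m := Finset.mem_erase.2 ⟨fun he => hmx he.symm, hx⟩
    have : x ∈ X.erase x := this.2 hxr
    exact absurd this (by simp)
  · exact absurd heq.symm hmx
  · exact hgt

private lemma packet_lexLt_sum {X A B : Finset ℕ} (hA : A ∈ packet X) (hB : B ∈ packet X)
    (h : lexLt A B) : ∑ a ∈ A, a < ∑ b ∈ B, b := by
  obtain ⟨x, hx, rfl⟩ := Finset.mem_image.1 hA
  obtain ⟨y, hy, rfl⟩ := Finset.mem_image.1 hB
  have hyx : y < x := erase_lexLt hx hy h
  have hsx : ∑ a ∈ X.erase x, a + x = ∑ a ∈ X, a := Finset.sum_erase_add X _ hx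
  have hsy : ∑ a ∈ X.erase y, a + y = ∑ a ∈ X, a := Finset.sum_erase_add X _ hy
  omega

private lemma packet_subset_ksubsets {n k : ℕ} {X : Finset ℕ} (hX : X ∈ ksubsets n (k+1)) :
    packet X ⊆ ksubsets n k := by
  rw [ksubsets, Finset.mem_powersetCard] at hX
  intro A hA
  obtain ⟨x, hx, rfl⟩ := Finset.mem_image.1 hA
  rw [ksubsets, Finset.mem_powersetCard]
  refine ⟨(Finset.erase_subset _ _).trans hX.1, ?_⟩
  rw [Finset.card_erase_of_mem hx, hX.2]
  omega

/-- For `1 ≤ k < n` and any `c`, the `k`-element subsets of `[n]` with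
element sum `c` form an antichain in the Gale order, and the number of consistent
subsets of the `k`-element subsets of `[n]` is at least `2 ^ |S_c|`. -/
theorem antichain_lower_bound (n k c : ℕ) (hk : 1 ≤ k) (hkn : k < n) :
    (∀ A ∈ (ksubsets n k).filter (fun X => ∑ x ∈ X, x = c),
      ∀ B ∈ (ksubsets n k).filter (fun X => ∑ x ∈ X, x = c),
        A ≠ B → ¬ galeLe A B) ∧
    2 ^ ((ksubsets n k).filter (fun X => ∑ x ∈ X, x = c)).card ≤
      Nat.card {I : Finset (Finset ℕ) // Consistent n k I} :=  by
  classical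
  set S := (ksubsets n k).filter (fun X => ∑ x ∈ X, x = c) with hS
  constructor
  · intro A hA B hB hne hgale
    rw [hS, Finset.mem_filter] at hA hB
    have hle : List.Forall₂ (· ≤ ·) (A.sort (· ≤ ·)) (B.sort (· ≤ ·)) := hgale
    have hsum : (A.sort (· ≤ ·)).sum = (B.sort (· ≤ ·)).sum := by
      rw [sort_sum, sort_sum, hA.2, hB.2]
    have heq := forall2_eq_of_sum_eq hle hsum
    apply hne
    ext a
    rw [← Finset.mem_sort (· ≤ ·), heq, Finset.mem_sort]
  · set f : Finset (Finset ℕ) → Finset (Finset ℕ) :=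
      fun T => (ksubsets n k).filter (fun X => ∑ x ∈ X, x < c ∨ X ∈ T) with hf
    have hcons : ∀ T ∈ S.powerset, Consistent n k (f T) := by
      intro T hT
      rw [Finset.mem_powerset] at hT
      refine ⟨Finset.filter_subset _ _, ?_⟩
      intro X hX
      left
      intro A hA B hB hBI hlex
      rw [hf, Finset.mem_filter] at hBI
      have hBc : ∑ x ∈ B, x ≤ c := by
        rcases hBI.2 with h | h
        · omega
        · have := hT h
          rw [hS, Finset.mem_filter] at this
          omega
      have hAB := packet_lexLt_sum hA hB hlex
      rw [hf, Finset.mem_filter]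
      exact ⟨packet_subset_ksubsets hX hA, Or.inl (by omega)⟩
    have hrec : ∀ T ∈ S.powerset, (f T).filter (fun X => ∑ x ∈ X, x = c) = T := by
      intro T hT
      rw [Finset.mem_powerset] at hT
      ext X
      simp only [hf, Finset.mem_filter]
      constructor
      · rintro ⟨⟨_, h | h⟩, hc⟩
        · omega
        · exact h
      · intro hX
        have := hT hX
        rw [hS, Finset.mem_filter] at this
        exact ⟨⟨this.1, Or.inr hX⟩, this.2⟩
    haveI : Finite {I : Finset (Finset ℕ) // Consistent n k I} := by
      apply Finite.of_injective
        (fun I : {I : Finset (Finset ℕ) // Consistent n k I} =>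
          (⟨I.1, Finset.mem_powerset.2 I.2.1⟩ : {J // J ∈ (ksubsets n k).powerset}))
      intro a b h
      simp only [Subtype.mk.injEq] at h
      exact Subtype.ext h
    have hinj : Function.Injective
        (fun T : {T // T ∈ S.powerset} =>
          (⟨f T.1, hcons T.1 T.2⟩ : {I : Finset (Finset ℕ) // Consistent n k I})) := by
      intro a b h
      have : f a.1 = f b.1 := congrArg Subtype.val h
      apply Subtype.ext
      rw [← hrec a.1 a.2, ← hrec b.1 b.2, this]
    calc 2 ^ S.card = S.powerset.card := (Finset.card_powerset S).symm
      _ = Nat.card {T // T ∈ S.powerset} := (Nat.card_eq_finsetCard _).symm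
      _ ≤ Nat.card {I : Finset (Finset ℕ) // Consistent n k I} :=
          Nat.card_le_card_of_injective _ hinj
end
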